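/- Let k be a field of characteristic 0 and let α, β, c₃, c₄, c₅, c₆ ∈ k with α ≠ β. In the free algebra k⟨x,y⟩ set r₁ = α(xy² + y²x) + β·yxy + c₃(x²y + xyx + yx²) + c₄·y³ + c₅·x³ and r₂ = α(yx² + x²y) + β·xyx + c₄(xy² + yxy + y²x) + c₃·x³ + c₆·y³. Set λ = 3/(4(α−β)) and, in k⟨x,y,z⟩, F₁ = ((8α+4β)/3)(xy² + yxy + y²x) + 4c₃(x²y + xyx + yx²) + 4c₄·y³ + 4c₅·x³ and F₂ = ((8α+4β)/3)(x²y + xyx + yx²) + 4c₄(xy² + yxy + y²x) + 4c₃·x³ + 4c₆·y³. Then there is a k-algebra isomorphism k⟨x,y⟩/(r₁, r₂) ≅ k⟨x,y,z⟩/(yz − zy − λF₁, zx − xz − λF₂, xy − yx − z), sending the images of x and y on the right to the images of x and y on the left (and z to the image of xy − yx). (This expresses that the cubic Jacobian algebra J(w) with potential w = αw₁ + βw₂ + c₃w₃ + c₄w₄ + c₅w₅ + c₆w₆, where w ∉ Sym⁴V, is the quantized algebra S^λ_f of Theorem 5.1.) -/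
import Mathlib


/-- `x`, `y`, the generators of the free algebra `k⟨x,y⟩`. -/
noncomputable def Xg (k : Type*) [CommRing k] : FreeAlgebra k (Fin 2) :=
  FreeAlgebra.ι k 0

noncomputable def Yg (k : Type*) [CommRing k] : FreeAlgebra k (Fin 2) :=
  FreeAlgebra.ι k 1

/-- `r₁ = α(xy² + y²x) + β·yxy + c₃(x²y + xyx + yx²) + c₄·y³ + c₅·x³`. -/
noncomputable def r1 (k : Type*) [CommRing k] (α β c3 c4 c5 : k) :
    FreeAlgebra k (Fin 2) :=
  α • (Xg k * Yg k * Yg k + Yg k * Yg k * Xg k) + β • (Yg k * Xg k * Yg k) +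
    c3 • (Xg k * Xg k * Yg k + Xg k * Yg k * Xg k + Yg k * Xg k * Xg k) +
    c4 • (Yg k * Yg k * Yg k) + c5 • (Xg k * Xg k * Xg k)

/-- `r₂ = α(yx² + x²y) + β·xyx + c₄(xy² + yxy + y²x) + c₃·x³ + c₆·y³`. -/
noncomputable def r2 (k : Type*) [CommRing k] (α β c3 c4 c6 : k) :
    FreeAlgebra k (Fin 2) :=
  α • (Yg k * Xg k * Xg k + Xg k * Xg k * Yg k) + β • (Xg k * Yg k * Xg k) +
    c4 • (Xg k * Yg k * Yg k + Yg k * Xg k * Yg k + Yg k * Yg k * Xg k) +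
    c3 • (Xg k * Xg k * Xg k) + c6 • (Yg k * Yg k * Yg k)

/-- The quotient relation on `k⟨x,y⟩` defining `J(w) = k⟨x,y⟩/(r₁, r₂)`. -/
noncomputable def relJ (k : Type*) [CommRing k] (α β c3 c4 c5 c6 : k) :
    FreeAlgebra k (Fin 2) → FreeAlgebra k (Fin 2) → Prop := fun p q =>
  (p = r1 k α β c3 c4 c5 ∨ p = r2 k α β c3 c4 c6) ∧ q = 0

/-- `x`, `y`, `z`, the generators of the free algebra `k⟨x,y,z⟩`. -/
noncomputable def Xh (k : Type*) [CommRing k] : FreeAlgebra k (Fin 3) :=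
  FreeAlgebra.ι k 0

noncomputable def Yh (k : Type*) [CommRing k] : FreeAlgebra k (Fin 3) :=
  FreeAlgebra.ι k 1

noncomputable def Zh (k : Type*) [CommRing k] : FreeAlgebra k (Fin 3) :=
  FreeAlgebra.ι k 2

/-- `F₁ = ((8α+4β)/3)(xy² + yxy + y²x) + 4c₃(x²y + xyx + yx²) + 4c₄·y³ + 4c₅·x³`. -/
noncomputable def F1 (k : Type*) [Field k] (α β c3 c4 c5 : k) :
    FreeAlgebra k (Fin 3) :=
  ((8 * α + 4 * β) / 3) •
      (Xh k * Yh k * Yh k + Yh k * Xh k * Yh k + Yh k * Yh k * Xh k) +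
    (4 * c3) • (Xh k * Xh k * Yh k + Xh k * Yh k * Xh k + Yh k * Xh k * Xh k) +
    (4 * c4) • (Yh k * Yh k * Yh k) + (4 * c5) • (Xh k * Xh k * Xh k)

/-- `F₂ = ((8α+4β)/3)(x²y + xyx + yx²) + 4c₄(xy² + yxy + y²x) + 4c₃·x³ + 4c₆·y³`. -/
noncomputable def F2 (k : Type*) [Field k] (α β c3 c4 c6 : k) :
    FreeAlgebra k (Fin 3) :=
  ((8 * α + 4 * β) / 3) •
      (Xh k * Xh k * Yh k + Xh k * Yh k * Xh k + Yh k * Xh k * Xh k) +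
    (4 * c4) • (Xh k * Yh k * Yh k + Yh k * Xh k * Yh k + Yh k * Yh k * Xh k) +
    (4 * c3) • (Xh k * Xh k * Xh k) + (4 * c6) • (Yh k * Yh k * Yh k)

/-- The quotient relation on `k⟨x,y,z⟩` defining
`S^λ_f = k⟨x,y,z⟩/(yz − zy − λF₁, zx − xz − λF₂, xy − yx − z)` with
`λ = 3/(4(α − β))`. -/
noncomputable def relS (k : Type*) [Field k] (α β c3 c4 c5 c6 : k) :
    FreeAlgebra k (Fin 3) → FreeAlgebra k (Fin 3) → Prop := fun p q =>
  (p = Yh k * Zh k - Zh k * Yh k - (3 / (4 * (α - β))) • F1 k α β c3 c4 c5 ∨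
   p = Zh k * Xh k - Xh k * Zh k - (3 / (4 * (α - β))) • F2 k α β c3 c4 c6 ∨
   p = Xh k * Yh k - Yh k * Xh k - Zh k) ∧ q = 0

/-! ### Auxiliary lemmas -/

section Aux

variable {k A : Type*} [Field k] [CharZero k] [Ring A] [Algebra k A]

lemma key1 (α β c3 c4 c5 : k) (hab : α ≠ β) (x y : A) :
    y * (x*y - y*x) - (x*y - y*x) * y -
      (3/(4*(α-β))) • (((8*α+4*β)/3) • (x*y*y + y*x*y + y*y*x)
        + (4*c3) • (x*x*y + x*y*x + y*x*x) + (4*c4) • (y*y*y) + (4*c5) • (x*x*x))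
    = (-(3/(α-β))) • (α • (x*y*y + y*y*x) + β • (y*x*y)
        + c3 • (x*x*y + x*y*x + y*x*x) + c4 • (y*y*y) + c5 • (x*x*x)) := by
  have h : α - β ≠ 0 := sub_ne_zero.mpr hab
  have h4 : (4:k) * α - 4 * β ≠ 0 := fun hc => h (by linear_combination hc / 4)
  simp only [mul_sub, sub_mul, mul_assoc, smul_add, smul_sub, smul_smul]
  match_scalars <;> field_simp [h, h4] <;> ring

lemma key1' (α β c3 c4 c5 : k) (hab : α ≠ β) (x y : A) :
    α • (x*y*y + y*y*x) + β • (y*x*y)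
        + c3 • (x*x*y + x*y*x + y*x*x) + c4 • (y*y*y) + c5 • (x*x*x)
    = (-(α-β)/3) • (y * (x*y - y*x) - (x*y - y*x) * y -
      (3/(4*(α-β))) • (((8*α+4*β)/3) • (x*y*y + y*x*y + y*y*x)
        + (4*c3) • (x*x*y + x*y*x + y*x*x) + (4*c4) • (y*y*y) + (4*c5) • (x*x*x))) := by
  have h : α - β ≠ 0 := sub_ne_zero.mpr hab
  have h4 : (4:k) * α - 4 * β ≠ 0 := fun hc => h (by linear_combination hc / 4)
  simp only [mul_sub, sub_mul, mul_assoc, smul_add, smul_sub, smul_smul]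
  match_scalars <;> field_simp [h, h4] <;> ring

lemma key2 (α β c3 c4 c6 : k) (hab : α ≠ β) (x y : A) :
    (x*y - y*x) * x - x * (x*y - y*x) -
      (3/(4*(α-β))) • (((8*α+4*β)/3) • (x*x*y + x*y*x + y*x*x)
        + (4*c4) • (x*y*y + y*x*y + y*y*x) + (4*c3) • (x*x*x) + (4*c6) • (y*y*y))
    = (-(3/(α-β))) • (α • (y*x*x + x*x*y) + β • (x*y*x)
        + c4 • (x*y*y + y*x*y + y*y*x) + c3 • (x*x*x) + c6 • (y*y*y)) := by
  have h : α - β ≠ 0 := sub_ne_zero.mpr hab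
  have h4 : (4:k) * α - 4 * β ≠ 0 := fun hc => h (by linear_combination hc / 4)
  simp only [mul_sub, sub_mul, mul_assoc, smul_add, smul_sub, smul_smul]
  match_scalars <;> field_simp [h, h4] <;> ring

lemma key2' (α β c3 c4 c6 : k) (hab : α ≠ β) (x y : A) :
    α • (y*x*x + x*x*y) + β • (x*y*x)
        + c4 • (x*y*y + y*x*y + y*y*x) + c3 • (x*x*x) + c6 • (y*y*y)
    = (-(α-β)/3) • ((x*y - y*x) * x - x * (x*y - y*x) -
      (3/(4*(α-β))) • (((8*α+4*β)/3) • (x*x*y + x*y*x + y*x*x)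
        + (4*c4) • (x*y*y + y*x*y + y*y*x) + (4*c3) • (x*x*x) + (4*c6) • (y*y*y))) := by
  have h : α - β ≠ 0 := sub_ne_zero.mpr hab
  have h4 : (4:k) * α - 4 * β ≠ 0 := fun hc => h (by linear_combination hc / 4)
  simp only [mul_sub, sub_mul, mul_assoc, smul_add, smul_sub, smul_smul]
  match_scalars <;> field_simp [h, h4] <;> ring

end Aux
section Main

variable (k : Type*) [Field k] [CharZero k] (α β c3 c4 c5 c6 : k)

/-- The substitution `x ↦ x`, `y ↦ y`, `z ↦ xy - yx` into the `J`-quotient. -/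
noncomputable def phi0 : FreeAlgebra k (Fin 3) →ₐ[k] RingQuot (relJ k α β c3 c4 c5 c6) :=
  FreeAlgebra.lift k
    ![RingQuot.mkAlgHom k (relJ k α β c3 c4 c5 c6) (Xg k),
      RingQuot.mkAlgHom k (relJ k α β c3 c4 c5 c6) (Yg k),
      RingQuot.mkAlgHom k (relJ k α β c3 c4 c5 c6) (Xg k * Yg k - Yg k * Xg k)]

@[simp] lemma phi0_X : phi0 k α β c3 c4 c5 c6 (Xh k) =
    RingQuot.mkAlgHom k (relJ k α β c3 c4 c5 c6) (Xg k) := by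
  simp [phi0, Xh]

@[simp] lemma phi0_Y : phi0 k α β c3 c4 c5 c6 (Yh k) =
    RingQuot.mkAlgHom k (relJ k α β c3 c4 c5 c6) (Yg k) := by
  simp [phi0, Yh]

@[simp] lemma phi0_Z : phi0 k α β c3 c4 c5 c6 (Zh k) =
    RingQuot.mkAlgHom k (relJ k α β c3 c4 c5 c6) (Xg k) *
      RingQuot.mkAlgHom k (relJ k α β c3 c4 c5 c6) (Yg k) -
    RingQuot.mkAlgHom k (relJ k α β c3 c4 c5 c6) (Yg k) *
      RingQuot.mkAlgHom k (relJ k α β c3 c4 c5 c6) (Xg k) := by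
  simp [phi0, Zh]

/-- The substitution `x ↦ x`, `y ↦ y` into the `S`-quotient. -/
noncomputable def psi0 : FreeAlgebra k (Fin 2) →ₐ[k] RingQuot (relS k α β c3 c4 c5 c6) :=
  FreeAlgebra.lift k
    ![RingQuot.mkAlgHom k (relS k α β c3 c4 c5 c6) (Xh k),
      RingQuot.mkAlgHom k (relS k α β c3 c4 c5 c6) (Yh k)]

@[simp] lemma psi0_X : psi0 k α β c3 c4 c5 c6 (Xg k) =
    RingQuot.mkAlgHom k (relS k α β c3 c4 c5 c6) (Xh k) := by
  simp [psi0, Xg]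

@[simp] lemma psi0_Y : psi0 k α β c3 c4 c5 c6 (Yg k) =
    RingQuot.mkAlgHom k (relS k α β c3 c4 c5 c6) (Yh k) := by
  simp [psi0, Yg]

lemma mkJ_r1 : RingQuot.mkAlgHom k (relJ k α β c3 c4 c5 c6) (r1 k α β c3 c4 c5) = 0 := by
  have := RingQuot.mkAlgHom_rel k (s := relJ k α β c3 c4 c5 c6)
    (x := r1 k α β c3 c4 c5) (y := 0) ⟨Or.inl rfl, rfl⟩
  simpa using this

lemma mkJ_r2 : RingQuot.mkAlgHom k (relJ k α β c3 c4 c5 c6) (r2 k α β c3 c4 c6) = 0 := by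
  have := RingQuot.mkAlgHom_rel k (s := relJ k α β c3 c4 c5 c6)
    (x := r2 k α β c3 c4 c6) (y := 0) ⟨Or.inr rfl, rfl⟩
  simpa using this

lemma mkS_rel1 : RingQuot.mkAlgHom k (relS k α β c3 c4 c5 c6)
    (Yh k * Zh k - Zh k * Yh k - (3 / (4 * (α - β))) • F1 k α β c3 c4 c5) = 0 := by
  have := RingQuot.mkAlgHom_rel k (s := relS k α β c3 c4 c5 c6)
    (y := 0) ⟨Or.inl rfl, rfl⟩
  simpa using this

lemma mkS_rel2 : RingQuot.mkAlgHom k (relS k α β c3 c4 c5 c6)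
    (Zh k * Xh k - Xh k * Zh k - (3 / (4 * (α - β))) • F2 k α β c3 c4 c6) = 0 := by
  have := RingQuot.mkAlgHom_rel k (s := relS k α β c3 c4 c5 c6)
    (y := 0) ⟨Or.inr (Or.inl rfl), rfl⟩
  simpa using this

lemma mkS_Z : RingQuot.mkAlgHom k (relS k α β c3 c4 c5 c6) (Xh k) *
      RingQuot.mkAlgHom k (relS k α β c3 c4 c5 c6) (Yh k) -
    RingQuot.mkAlgHom k (relS k α β c3 c4 c5 c6) (Yh k) *
      RingQuot.mkAlgHom k (relS k α β c3 c4 c5 c6) (Xh k) =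
    RingQuot.mkAlgHom k (relS k α β c3 c4 c5 c6) (Zh k) := by
  have := RingQuot.mkAlgHom_rel k (s := relS k α β c3 c4 c5 c6)
    (y := 0) ⟨Or.inr (Or.inr rfl), rfl⟩
  rw [map_zero, map_sub, map_sub, map_mul, map_mul, sub_eq_zero] at this
  rw [this]

lemma phi0_rel (hab : α ≠ β) : ∀ ⦃p q⦄, relS k α β c3 c4 c5 c6 p q →
    phi0 k α β c3 c4 c5 c6 p = phi0 k α β c3 c4 c5 c6 q := by
  rintro p q ⟨hp, rfl⟩
  rw [map_zero]
  set mkJ := RingQuot.mkAlgHom k (relJ k α β c3 c4 c5 c6) with hmkJ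
  rcases hp with rfl | rfl | rfl
  · simp only [map_sub, map_mul, map_smul, map_add, phi0_X, phi0_Y, phi0_Z, F1]
    rw [key1 α β c3 c4 c5 hab (mkJ (Xg k)) (mkJ (Yg k))]
    have : α • (mkJ (Xg k) * mkJ (Yg k) * mkJ (Yg k) + mkJ (Yg k) * mkJ (Yg k) * mkJ (Xg k))
        + β • (mkJ (Yg k) * mkJ (Xg k) * mkJ (Yg k))
        + c3 • (mkJ (Xg k) * mkJ (Xg k) * mkJ (Yg k) + mkJ (Xg k) * mkJ (Yg k) * mkJ (Xg k)
            + mkJ (Yg k) * mkJ (Xg k) * mkJ (Xg k))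
        + c4 • (mkJ (Yg k) * mkJ (Yg k) * mkJ (Yg k))
        + c5 • (mkJ (Xg k) * mkJ (Xg k) * mkJ (Xg k)) = mkJ (r1 k α β c3 c4 c5) := by
      simp [r1, map_add, map_smul, map_mul]
    rw [this, mkJ_r1, smul_zero]
  · simp only [map_sub, map_mul, map_smul, map_add, phi0_X, phi0_Y, phi0_Z, F2]
    rw [key2 α β c3 c4 c6 hab (mkJ (Xg k)) (mkJ (Yg k))]
    have : α • (mkJ (Yg k) * mkJ (Xg k) * mkJ (Xg k) + mkJ (Xg k) * mkJ (Xg k) * mkJ (Yg k))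
        + β • (mkJ (Xg k) * mkJ (Yg k) * mkJ (Xg k))
        + c4 • (mkJ (Xg k) * mkJ (Yg k) * mkJ (Yg k) + mkJ (Yg k) * mkJ (Xg k) * mkJ (Yg k)
            + mkJ (Yg k) * mkJ (Yg k) * mkJ (Xg k))
        + c3 • (mkJ (Xg k) * mkJ (Xg k) * mkJ (Xg k))
        + c6 • (mkJ (Yg k) * mkJ (Yg k) * mkJ (Yg k)) = mkJ (r2 k α β c3 c4 c6) := by
      simp [r2, map_add, map_smul, map_mul]
    rw [this, mkJ_r2, smul_zero]
  · simp only [map_sub, map_mul, phi0_X, phi0_Y, phi0_Z]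
    abel

lemma psi0_rel (hab : α ≠ β) : ∀ ⦃p q⦄, relJ k α β c3 c4 c5 c6 p q →
    psi0 k α β c3 c4 c5 c6 p = psi0 k α β c3 c4 c5 c6 q := by
  rintro p q ⟨hp, rfl⟩
  rw [map_zero]
  set mkS := RingQuot.mkAlgHom k (relS k α β c3 c4 c5 c6) with hmkS
  rcases hp with rfl | rfl
  · simp only [r1, map_add, map_smul, map_mul, psi0_X, psi0_Y]
    rw [key1' α β c3 c4 c5 hab (mkS (Xh k)) (mkS (Yh k)), mkS_Z]
    have : ((8*α+4*β)/3) • (mkS (Xh k) * mkS (Yh k) * mkS (Yh k)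
          + mkS (Yh k) * mkS (Xh k) * mkS (Yh k) + mkS (Yh k) * mkS (Yh k) * mkS (Xh k))
        + (4*c3) • (mkS (Xh k) * mkS (Xh k) * mkS (Yh k) + mkS (Xh k) * mkS (Yh k) * mkS (Xh k)
          + mkS (Yh k) * mkS (Xh k) * mkS (Xh k))
        + (4*c4) • (mkS (Yh k) * mkS (Yh k) * mkS (Yh k))
        + (4*c5) • (mkS (Xh k) * mkS (Xh k) * mkS (Xh k)) = mkS (F1 k α β c3 c4 c5) := by
      simp [F1, map_add, map_smul, map_mul]
    rw [this]
    have h0 := mkS_rel1 k α β c3 c4 c5 c6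
    rw [map_sub, map_sub, map_mul, map_mul, map_smul] at h0
    rw [← hmkS, h0, smul_zero]
  · simp only [r2, map_add, map_smul, map_mul, psi0_X, psi0_Y]
    rw [key2' α β c3 c4 c6 hab (mkS (Xh k)) (mkS (Yh k)), mkS_Z]
    have : ((8*α+4*β)/3) • (mkS (Xh k) * mkS (Xh k) * mkS (Yh k)
          + mkS (Xh k) * mkS (Yh k) * mkS (Xh k) + mkS (Yh k) * mkS (Xh k) * mkS (Xh k))
        + (4*c4) • (mkS (Xh k) * mkS (Yh k) * mkS (Yh k) + mkS (Yh k) * mkS (Xh k) * mkS (Yh k)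
          + mkS (Yh k) * mkS (Yh k) * mkS (Xh k))
        + (4*c3) • (mkS (Xh k) * mkS (Xh k) * mkS (Xh k))
        + (4*c6) • (mkS (Yh k) * mkS (Yh k) * mkS (Yh k)) = mkS (F2 k α β c3 c4 c6) := by
      simp [F2, map_add, map_smul, map_mul]
    rw [this]
    have h0 := mkS_rel2 k α β c3 c4 c5 c6
    rw [map_sub, map_sub, map_mul, map_mul, map_smul] at h0
    rw [← hmkS, h0, smul_zero]

end Main

/-- for `α ≠ β`, there is a `k`-algebra isomorphism
`k⟨x,y⟩/(r₁, r₂) ≅ k⟨x,y,z⟩/(yz − zy − λF₁, zx − xz − λF₂, xy − yx − z)`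
sending the images of `x`, `y` on the right to the images of `x`, `y` on the left,
and `z` to the image of `xy − yx`. -/
theorem statement19 (k : Type*) [Field k] [CharZero k]
    (α β c3 c4 c5 c6 : k) (hab : α ≠ β) :
    ∃ e : RingQuot (relS k α β c3 c4 c5 c6) ≃ₐ[k] RingQuot (relJ k α β c3 c4 c5 c6),
      e (RingQuot.mkAlgHom k (relS k α β c3 c4 c5 c6) (Xh k)) =
        RingQuot.mkAlgHom k (relJ k α β c3 c4 c5 c6) (Xg k) ∧
      e (RingQuot.mkAlgHom k (relS k α β c3 c4 c5 c6) (Yh k)) =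
        RingQuot.mkAlgHom k (relJ k α β c3 c4 c5 c6) (Yg k) ∧
      e (RingQuot.mkAlgHom k (relS k α β c3 c4 c5 c6) (Zh k)) =
        RingQuot.mkAlgHom k (relJ k α β c3 c4 c5 c6) (Xg k * Yg k - Yg k * Xg k) := by
  let φ : RingQuot (relS k α β c3 c4 c5 c6) →ₐ[k] RingQuot (relJ k α β c3 c4 c5 c6) :=
    RingQuot.liftAlgHom k ⟨phi0 k α β c3 c4 c5 c6, phi0_rel k α β c3 c4 c5 c6 hab⟩
  let ψ : RingQuot (relJ k α β c3 c4 c5 c6) →ₐ[k] RingQuot (relS k α β c3 c4 c5 c6) :=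
    RingQuot.liftAlgHom k ⟨psi0 k α β c3 c4 c5 c6, psi0_rel k α β c3 c4 c5 c6 hab⟩
  have hφ : ∀ a, φ (RingQuot.mkAlgHom k (relS k α β c3 c4 c5 c6) a) =
      phi0 k α β c3 c4 c5 c6 a := fun a =>
    RingQuot.liftAlgHom_mkAlgHom_apply k _ _ a
  have hψ : ∀ a, ψ (RingQuot.mkAlgHom k (relJ k α β c3 c4 c5 c6) a) =
      psi0 k α β c3 c4 c5 c6 a := fun a =>
    RingQuot.liftAlgHom_mkAlgHom_apply k _ _ a
  have h1 : φ.comp ψ = AlgHom.id k (RingQuot (relJ k α β c3 c4 c5 c6)) := by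
    apply RingQuot.ringQuot_ext'
    apply FreeAlgebra.hom_ext
    funext i
    fin_cases i <;>
      simp [AlgHom.comp_apply, hψ, hφ, show FreeAlgebra.ι k (0 : Fin 2) = Xg k from rfl,
        show FreeAlgebra.ι k (1 : Fin 2) = Yg k from rfl]
  have h2 : ψ.comp φ = AlgHom.id k (RingQuot (relS k α β c3 c4 c5 c6)) := by
    apply RingQuot.ringQuot_ext'
    apply FreeAlgebra.hom_ext
    funext i
    fin_cases i <;>
      simp [AlgHom.comp_apply, hφ, hψ, mkS_Z, show FreeAlgebra.ι k (0 : Fin 3) = Xh k from rfl,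
        show FreeAlgebra.ι k (1 : Fin 3) = Yh k from rfl,
        show FreeAlgebra.ι k (2 : Fin 3) = Zh k from rfl]
  refine ⟨AlgEquiv.ofAlgHom φ ψ h1 h2, ?_, ?_, ?_⟩
  · show φ _ = _
    rw [hφ, phi0_X]
  · show φ _ = _
    rw [hφ, phi0_Y]
  · show φ _ = _
    rw [hφ, phi0_Z, map_sub, map_mul, map_mul]
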